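/- (Recursion bound for TBREK.) Let U ∈ ℝ^{m×m₁×p} and Y ∈ ℝ^{m×l×p}, and let X‡ ∈ ℝ^{m₁×l×p} be the unique minimizer of ‖U∗X − Y‖_F². Let q be a probability distribution on {1,…,m₁} with U_{:j:}^⊤∗U_{:j:} t-invertible for all j, and let (T_U, prob_U) be a block sampling scheme on the row slices of U with U_μ∗U_μ^⊤ t-invertible for all μ ∈ T_U and largest block size d_{T_U}. Define the TBREK iterates: W⁰ = Y, X⁰ = 0; at each step t sample j_t ∼ q and μ_t ∼ prob_U independently of everything else and set W^t = W^{t−1} − U_{:j_t:}∗(U_{:j_t:}^⊤∗U_{:j_t:})^{-1}∗(U_{:j_t:}^⊤∗W^{t−1}) and X^t = X^{t−1} − U_{μ_t}^⊤∗(U_{μ_t}∗U_{μ_t}^⊤)^{-1}∗(U_{μ_t}∗X^{t−1} − Y_{μ_t} + W^t_{μ_t}). Set α_U = 1 − σ_min(Σ_{μ∈T_U} prob_U(μ)·bcirc(P_{U_μ})), β_U = 1 − σ_min(Σ_{j=1}^{m₁} q(j)·bcirc(P_{U_{:j:}^⊤})), and θ_U = d_{T_U}·p·Σ_{μ∈T_U}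 prob_U(μ)·‖(bcirc(U_μ)bcirc(U_μ)^⊤)^{-1}‖₂. Then, with E denoting expectation over the sample sequence ((j_1,μ_1),…,(j_t,μ_t)) weighted by Π_{s=1}^t q(j_s)prob_U(μ_s), E‖X^t − X‡‖_F² ≤ α_U^t·‖X‡‖_F² + θ_U·(Σ_{s=1}^t β_U^s α_U^{t−s})·‖U∗X‡‖_F². -/
import Mathlib


open Matrix
open scoped BigOperators

/-- A real third-order tensor with row index `I`, column index `J`, and `p` frontal slices. -/
abbrev Tensor (I J : Type*) (p : ℕ) := I → J → Fin p → ℝ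

namespace Tensor

variable {I J K : Type*} {p : ℕ}

/-- Block-circulant matricization: `bcirc A [(i,k),(j,l)] = A i j ((k - l) mod p)`. -/
def bcirc (A : Tensor I J p) : Matrix (I × Fin p) (J × Fin p) ℝ :=
  Matrix.of fun ik jl => A ik.1 jl.1 (ik.2 - jl.2)

/-- Unfolding along the second mode: `unfold B [(j,k), i] = B j i k`. -/
def unfold {S : Type*} (B : Tensor J S p) : Matrix (J × Fin p) S ℝ :=
  Matrix.of fun jk s => B jk.1 s jk.2

/-- The t-product, the unique tensor with `unfold (A ∗ B) = bcirc A * unfold B`. -/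
def tprod [Fintype J] (A : Tensor I J p) (B : Tensor J K p) : Tensor I K p :=
  fun i s k => ∑ j : J, ∑ l : Fin p, A i j (k - l) * B j s l

/-- Tensor transpose: `Aᵀ j i k = A i j ((-k) mod p)`. -/
def ttrans (A : Tensor I J p) : Tensor J I p := fun j i k => A i j (-k)

/-- The identity tensor: first frontal slice is the identity, the others are zero. -/
def tid (I : Type*) [DecidableEq I] (p : ℕ) : Tensor I I p :=
  fun i j k => if i = j ∧ (k : ℕ) = 0 then 1 else 0

/-- t-invertibility of a square tensor. -/
def TInvertible [Fintype I] [DecidableEq I] (S : Tensor I I p) : Prop :=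
  ∃ T : Tensor I I p, tprod S T = tid I p ∧ tprod T S = tid I p

open Classical in
/-- The t-inverse of a square tensor (junk value when not t-invertible). -/
noncomputable def tinv [Fintype I] [DecidableEq I] (S : Tensor I I p) : Tensor I I p :=
  if h : TInvertible S then h.choose else 0

/-- The projection tensor `P_M = Mᵀ ∗ (M ∗ Mᵀ)⁻¹ ∗ M`. -/
noncomputable def proj [Fintype I] [DecidableEq I] [Fintype J] (M : Tensor I J p) :
    Tensor J J p :=
  tprod (ttrans M) (tprod (tinv (tprod M (ttrans M))) M)

/-- The projection tensor `P_{Mᵀ} = M ∗ (Mᵀ ∗ M)⁻¹ ∗ Mᵀ`. -/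
noncomputable def projT [Fintype I] [Fintype J] [DecidableEq J] (M : Tensor I J p) :
    Tensor I I p :=
  tprod M (tprod (tinv (tprod (ttrans M) M)) (ttrans M))

/-- The Frobenius inner product of two tensors. -/
def tinner [Fintype I] [Fintype J] (A B : Tensor I J p) : ℝ :=
  ∑ i : I, ∑ j : J, ∑ k : Fin p, A i j k * B i j k

/-- The squared Frobenius norm of a tensor. -/
def frobSq [Fintype I] [Fintype J] (A : Tensor I J p) : ℝ :=
  ∑ i : I, ∑ j : J, ∑ k : Fin p, (A i j k) ^ 2

/-- The Frobenius norm of a tensor. -/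
noncomputable def frobNorm [Fintype I] [Fintype J] (A : Tensor I J p) : ℝ :=
  Real.sqrt (frobSq A)

/-- The subtensor of the row slices of `U` indexed by `μ`. -/
def rowSub (U : Tensor I J p) (μ : Finset I) : Tensor {i // i ∈ μ} J p :=
  fun i => U i.1

/-- The `j`-th lateral slice of `U`, as an `I × 1 × p` tensor. -/
def latSlice (U : Tensor I J p) (j : J) : Tensor I (Fin 1) p :=
  fun i _ k => U i j k

/-- One (block) Kaczmarz step for the system with operator `U`, sampled row block `μ`,
current iterate `X` and measurement block `Bμ`:
`X ← X - U_μᵀ ∗ (U_μ ∗ U_μᵀ)⁻¹ ∗ (U_μ ∗ X - Bμ)`. -/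
noncomputable def kaczStep [DecidableEq I] [Fintype J] (U : Tensor I J p) (μ : Finset I)
    (X : Tensor J K p) (Bμ : Tensor {i // i ∈ μ} K p) : Tensor J K p :=
  X - tprod (ttrans (rowSub U μ))
    (tprod (tinv (tprod (rowSub U μ) (ttrans (rowSub U μ))))
      (tprod (rowSub U μ) X - Bμ))

/-- One extended (column-like) step:
`W ← W - U_{:j:} ∗ (U_{:j:}ᵀ ∗ U_{:j:})⁻¹ ∗ (U_{:j:}ᵀ ∗ W)`. -/
noncomputable def extStep [Fintype I] (U : Tensor I J p) (j : J) (W : Tensor I K p) :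
    Tensor I K p :=
  W - tprod (latSlice U j)
    (tprod (tinv (tprod (ttrans (latSlice U j)) (latSlice U j)))
      (tprod (ttrans (latSlice U j)) W))

end Tensor

/-- Squared Frobenius norm of a real matrix. -/
def matFrobSq {I J : Type*} [Fintype I] [Fintype J] (A : Matrix I J ℝ) : ℝ :=
  ∑ i : I, ∑ j : J, (A i j) ^ 2

/-- Spectral norm (largest singular value) of a real matrix, as the supremum of `‖A x‖`
over unit vectors `x`. -/
noncomputable def specNorm {I J : Type*} [Fintype I] [Fintype J] (A : Matrix I J ℝ) : ℝ :=
  sSup {r : ℝ | ∃ x : J → ℝ, (∑ j : J, (x j) ^ 2) = 1 ∧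
    r = Real.sqrt (∑ i : I, (A.mulVec x i) ^ 2)}

/-- Smallest eigenvalue of a symmetric real matrix, via the Rayleigh quotient:
`σ_min(S) = inf {xᵀ S x : ‖x‖ = 1}`. -/
noncomputable def minEig {I : Type*} [Fintype I] (S : Matrix I I ℝ) : ℝ :=
  sInf {r : ℝ | ∃ x : I → ℝ, (∑ i : I, (x i) ^ 2) = 1 ∧
    r = ∑ i : I, x i * S.mulVec x i}

namespace Tensor

/-- One TBREK step: update `(W, X)` using samples `(j, μ)`:
`W ← W − U_{:j:}∗(U_{:j:}ᵀ∗U_{:j:})⁻¹∗(U_{:j:}ᵀ∗W)` and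
`X ← X − U_μᵀ∗(U_μ∗U_μᵀ)⁻¹∗(U_μ∗X − Y_μ + W'_μ)`. -/
noncomputable def tbrekStep {m m₁ l p : ℕ} (U : Tensor (Fin m) (Fin m₁) p)
    (Y : Tensor (Fin m) (Fin l) p)
    (st : Tensor (Fin m) (Fin l) p × Tensor (Fin m₁) (Fin l) p)
    (samp : Fin m₁ × Finset (Fin m)) :
    Tensor (Fin m) (Fin l) p × Tensor (Fin m₁) (Fin l) p :=
  let W' := extStep U samp.1 st.1
  (W', kaczStep U samp.2 st.2 (rowSub Y samp.2 - rowSub W' samp.2))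

/-- TBREK iterates from `W⁰ = Y`, `X⁰ = 0`, applying the steps for the given
(chronologically ordered) sample list. -/
noncomputable def tbrekIter {m m₁ l p : ℕ} (U : Tensor (Fin m) (Fin m₁) p)
    (Y : Tensor (Fin m) (Fin l) p) (samples : List (Fin m₁ × Finset (Fin m))) :
    Tensor (Fin m) (Fin l) p × Tensor (Fin m₁) (Fin l) p :=
  samples.foldl (tbrekStep U Y) (Y, 0)

end Tensor

namespace Aux

variable {n s : Type*} [Fintype n] [Fintype s]

/-- matrix Frobenius inner product -/
def minner (A B : Matrix n s ℝ) : ℝ := ∑ i : n, ∑ j : s, A i j * B i j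

lemma minner_comm (A B : Matrix n s ℝ) : minner A B = minner B A := by
  simp [minner, mul_comm]

lemma minner_self (A : Matrix n s ℝ) : minner A A = matFrobSq A := by
  simp [minner, matFrobSq, sq]

lemma matFrobSq_nonneg (A : Matrix n s ℝ) : 0 ≤ matFrobSq A := by
  apply Finset.sum_nonneg; intro i _; apply Finset.sum_nonneg; intro j _; positivity

lemma matFrobSq_eq_zero {A : Matrix n s ℝ} (h : matFrobSq A = 0) : A = 0 := by
  ext i j
  have h1 : ∀ i ∈ Finset.univ (α := n), (0:ℝ) ≤ ∑ j : s, (A i j)^2 := by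
    intro i _; apply Finset.sum_nonneg; intro j _; positivity
  have h2 := (Finset.sum_eq_zero_iff_of_nonneg h1).mp h i (Finset.mem_univ i)
  have h3 : ∀ j ∈ Finset.univ (α := s), (0:ℝ) ≤ (A i j)^2 := fun j _ => sq_nonneg _
  have := (Finset.sum_eq_zero_iff_of_nonneg h3).mp h2 j (Finset.mem_univ j)
  simpa using pow_eq_zero_iff (n := 2) (by norm_num) |>.mp this

lemma minner_sub_left (A B C : Matrix n s ℝ) :
    minner (A - B) C = minner A C - minner B C := by
  simp [minner, sub_mul, Finset.sum_sub_distrib]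

lemma minner_sub_right (A B C : Matrix n s ℝ) :
    minner A (B - C) = minner A B - minner A C := by
  simp [minner, mul_sub, Finset.sum_sub_distrib]

lemma matFrobSq_sub (A B : Matrix n s ℝ) :
    matFrobSq (A - B) = matFrobSq A - 2 * minner A B + matFrobSq B := by
  simp only [matFrobSq, minner, Matrix.sub_apply]
  rw [show (∑ i : n, ∑ j : s, (A i j - B i j)^2)
      = ∑ i : n, ∑ j : s, ((A i j)^2 - 2*(A i j * B i j) + (B i j)^2) from
    Finset.sum_congr rfl fun i _ => Finset.sum_congr rfl fun j _ => by ring]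
  simp [Finset.sum_add_distrib, Finset.sum_sub_distrib, Finset.mul_sum]

variable {m : Type*} [Fintype m]

lemma minner_eq_trace (A B : Matrix n s ℝ) : minner A B = (Aᵀ * B).trace := by
  simp only [minner, Matrix.trace, Matrix.diag, Matrix.mul_apply, Matrix.transpose_apply]
  exact Finset.sum_comm

lemma minner_mul_left (M : Matrix m n ℝ) (A : Matrix n s ℝ) (B : Matrix m s ℝ) :
    minner (M * A) B = minner A (Mᵀ * B) := by
  rw [minner_eq_trace, minner_eq_trace, Matrix.transpose_mul, Matrix.mul_assoc]

lemma minner_smul_right (c : ℝ) (A B : Matrix n s ℝ) :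
    minner A (c • B) = c * minner A B := by
  simp [minner, Finset.mul_sum]; apply Finset.sum_congr rfl; intro i _
  apply Finset.sum_congr rfl; intro j _; ring


lemma cs_sum (x y : n → ℝ) :
    ∑ i : n, x i * y i ≤ Real.sqrt (∑ i : n, (x i)^2) * Real.sqrt (∑ i : n, (y i)^2) := by
  have h := Finset.sum_mul_sq_le_sq_mul_sq Finset.univ x y
  have h2 : ∑ i : n, x i * y i ≤ |∑ i : n, x i * y i| := le_abs_self _
  refine h2.trans ?_
  rw [← Real.sqrt_sq_eq_abs, ← Real.sqrt_mul (by positivity)]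
  exact Real.sqrt_le_sqrt h

lemma rayleigh_bddBelow (S : Matrix n n ℝ) :
    BddBelow {r : ℝ | ∃ x : n → ℝ, (∑ i : n, (x i) ^ 2) = 1 ∧
      r = ∑ i : n, x i * S.mulVec x i} := by
  refine ⟨-(∑ i : n, ∑ k : n, |S i k|), ?_⟩
  rintro r ⟨x, hx, rfl⟩
  have hxi : ∀ i, |x i| ≤ 1 := by
    intro i
    have h1 : (x i)^2 ≤ 1 := hx ▸ Finset.single_le_sum (f := fun i => (x i)^2)
      (fun i _ => sq_nonneg _) (Finset.mem_univ i)
    calc |x i| = Real.sqrt ((x i)^2) := (Real.sqrt_sq_eq_abs _).symm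
    _ ≤ Real.sqrt 1 := Real.sqrt_le_sqrt h1
    _ = 1 := Real.sqrt_one
  have : |∑ i : n, x i * S.mulVec x i| ≤ ∑ i : n, ∑ k : n, |S i k| := by
    refine (Finset.abs_sum_le_sum_abs _ _).trans ?_
    refine Finset.sum_le_sum fun i _ => ?_
    rw [abs_mul, Matrix.mulVec, dotProduct]
    calc |x i| * |∑ k : n, S i k * x k| ≤ 1 * |∑ k : n, S i k * x k| := by
            exact mul_le_mul_of_nonneg_right (hxi i) (abs_nonneg _)
      _ = |∑ k : n, S i k * x k| := one_mul _
      _ ≤ ∑ k : n, |S i k * x k| := Finset.abs_sum_le_sum_abs _ _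
      _ ≤ ∑ k : n, |S i k| := by
            refine Finset.sum_le_sum fun k _ => ?_
            rw [abs_mul]
            calc |S i k| * |x k| ≤ |S i k| * 1 :=
              mul_le_mul_of_nonneg_left (hxi k) (abs_nonneg _)
            _ = |S i k| := mul_one _
  linarith [neg_abs_le (∑ i : n, x i * S.mulVec x i)]

lemma rayleigh_le (S : Matrix n n ℝ) (x : n → ℝ) :
    minEig S * (∑ i : n, (x i)^2) ≤ ∑ i : n, x i * S.mulVec x i := by
  by_cases hx : (∑ i : n, (x i)^2) = 0
  · have hx0 : x = 0 := by
      funext i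
      have := (Finset.sum_eq_zero_iff_of_nonneg (fun i _ => sq_nonneg (x i))).mp hx i
        (Finset.mem_univ i)
      exact pow_eq_zero_iff (n := 2) (by norm_num) |>.mp this
    simp [hx0, Matrix.mulVec]
  · have hpos : 0 < ∑ i : n, (x i)^2 :=
      lt_of_le_of_ne (Finset.sum_nonneg fun i _ => sq_nonneg _) (Ne.symm hx)
    set c : ℝ := (Real.sqrt (∑ i : n, (x i)^2))⁻¹ with hc
    have hcpos : 0 < c := by positivity
    have hc2 : c^2 * (∑ i : n, (x i)^2) = 1 := by
      rw [hc, ← Real.sqrt_inv, Real.sq_sqrt (by positivity)]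
      field_simp
    have hmem : c^2 * (∑ i : n, x i * S.mulVec x i) ∈ {r : ℝ | ∃ y : n → ℝ,
        (∑ i : n, (y i) ^ 2) = 1 ∧ r = ∑ i : n, y i * S.mulVec y i} := by
      refine ⟨c • x, ?_, ?_⟩
      · simpa [mul_pow, Finset.mul_sum] using hc2
      · rw [Matrix.mulVec_smul]
        simp only [Pi.smul_apply, smul_eq_mul, Finset.mul_sum]
        apply Finset.sum_congr rfl; intro i _; ring
    have hle := csInf_le (rayleigh_bddBelow S) hmem
    have := mul_le_mul_of_nonneg_right hle hpos.le
    calc minEig S * (∑ i : n, (x i)^2) = minEig S * (∑ i : n, (x i)^2) := rfl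
    _ ≤ (c^2 * (∑ i : n, x i * S.mulVec x i)) * (∑ i : n, (x i)^2) := this
    _ = (c^2 * (∑ i : n, (x i)^2)) * (∑ i : n, x i * S.mulVec x i) := by ring
    _ = ∑ i : n, x i * S.mulVec x i := by rw [hc2, one_mul]

lemma specNorm_bddAbove (A : Matrix m n ℝ) :
    BddAbove {r : ℝ | ∃ x : n → ℝ, (∑ j : n, (x j) ^ 2) = 1 ∧
      r = Real.sqrt (∑ i : m, (A.mulVec x i) ^ 2)} := by
  refine ⟨Real.sqrt (∑ i : m, ∑ j : n, (A i j)^2), ?_⟩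
  rintro r ⟨x, hx, rfl⟩
  apply Real.sqrt_le_sqrt
  refine Finset.sum_le_sum fun i _ => ?_
  have h := Finset.sum_mul_sq_le_sq_mul_sq Finset.univ (fun j => A i j) x
  rw [hx, mul_one] at h
  simpa [Matrix.mulVec, dotProduct] using h

lemma sqrt_sum_mulVec_le (A : Matrix m n ℝ) (x : n → ℝ) :
    Real.sqrt (∑ i : m, (A.mulVec x i) ^ 2) ≤
      specNorm A * Real.sqrt (∑ j : n, (x j)^2) := by
  by_cases hx : (∑ j : n, (x j)^2) = 0
  · have hx0 : x = 0 := by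
      funext j
      have := (Finset.sum_eq_zero_iff_of_nonneg (fun j _ => sq_nonneg (x j))).mp hx j
        (Finset.mem_univ j)
      exact pow_eq_zero_iff (n := 2) (by norm_num) |>.mp this
    simp [hx0, Matrix.mulVec, hx]
  · have hpos : 0 < ∑ j : n, (x j)^2 :=
      lt_of_le_of_ne (Finset.sum_nonneg fun j _ => sq_nonneg _) (Ne.symm hx)
    set c : ℝ := (Real.sqrt (∑ j : n, (x j)^2))⁻¹ with hc
    have hcpos : 0 < c := by positivity
    have hc2 : c^2 * (∑ j : n, (x j)^2) = 1 := by
      rw [hc, ← Real.sqrt_inv, Real.sq_sqrt (by positivity)]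
      field_simp
    have hmem : Real.sqrt (∑ i : m, (A.mulVec (c • x) i) ^ 2) ∈
        {r : ℝ | ∃ y : n → ℝ, (∑ j : n, (y j) ^ 2) = 1 ∧
          r = Real.sqrt (∑ i : m, (A.mulVec y i) ^ 2)} := by
      refine ⟨c • x, ?_, rfl⟩
      simpa [mul_pow, Finset.mul_sum] using hc2
    have hle := le_csSup (specNorm_bddAbove A) hmem
    have heq : Real.sqrt (∑ i : m, (A.mulVec (c • x) i) ^ 2)
        = c * Real.sqrt (∑ i : m, (A.mulVec x i) ^ 2) := by
      rw [Matrix.mulVec_smul]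
      simp only [Pi.smul_apply, smul_eq_mul]
      rw [show (∑ i : m, (c * A.mulVec x i)^2) = c^2 * ∑ i : m, (A.mulVec x i)^2 by
        rw [Finset.mul_sum]; exact Finset.sum_congr rfl fun i _ => by ring]
      rw [Real.sqrt_mul (by positivity), Real.sqrt_sq hcpos.le]
    rw [heq] at hle
    have h2 : Real.sqrt (∑ i : m, (A.mulVec x i) ^ 2)
        = c⁻¹ * (c * Real.sqrt (∑ i : m, (A.mulVec x i) ^ 2)) := by
      field_simp
    rw [h2, hc, inv_inv]
    calc Real.sqrt (∑ j : n, (x j)^2) * (c * Real.sqrt (∑ i : m, (A.mulVec x i) ^ 2))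
        ≤ Real.sqrt (∑ j : n, (x j)^2) * specNorm A := by
          exact mul_le_mul_of_nonneg_left hle (Real.sqrt_nonneg _)
    _ = specNorm A * Real.sqrt (∑ j : n, (x j)^2) := mul_comm _ _

lemma specNorm_nonneg [Nonempty n] (A : Matrix m n ℝ) : 0 ≤ specNorm A := by
  classical
  obtain ⟨j0⟩ := ‹Nonempty n›
  have hmem : Real.sqrt (∑ i : m, (A.mulVec (Pi.single j0 1) i) ^ 2) ∈
      {r : ℝ | ∃ x : n → ℝ, (∑ j : n, (x j) ^ 2) = 1 ∧
        r = Real.sqrt (∑ i : m, (A.mulVec x i) ^ 2)} := by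
    refine ⟨Pi.single j0 1, ?_, rfl⟩
    rw [Finset.sum_eq_single j0]
    · simp
    · intro b _ hb; simp [Pi.single_eq_of_ne hb]
    · intro h; exact absurd (Finset.mem_univ j0) h
  exact le_trans (Real.sqrt_nonneg _) (le_csSup (specNorm_bddAbove A) hmem)

/-- quadratic form bound: x ⬝ S x ≤ specNorm S * ∑ x². -/
lemma quadform_le_specNorm (S : Matrix n n ℝ) (x : n → ℝ) :
    ∑ i : n, x i * S.mulVec x i ≤ specNorm S * (∑ i : n, (x i)^2) := by
  calc ∑ i : n, x i * S.mulVec x i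
      ≤ Real.sqrt (∑ i : n, (x i)^2) * Real.sqrt (∑ i : n, (S.mulVec x i)^2) :=
        cs_sum x (S.mulVec x)
  _ ≤ Real.sqrt (∑ i : n, (x i)^2) * (specNorm S * Real.sqrt (∑ i : n, (x i)^2)) :=
        mul_le_mul_of_nonneg_left (sqrt_sum_mulVec_le S x) (Real.sqrt_nonneg _)
  _ = specNorm S * (Real.sqrt (∑ i : n, (x i)^2) * Real.sqrt (∑ i : n, (x i)^2)) := by ring
  _ = specNorm S * (∑ i : n, (x i)^2) := by
        rw [Real.mul_self_sqrt (by positivity)]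

lemma proj_quad_eq (P : Matrix n n ℝ) (hsym : Pᵀ = P) (hid : P * P = P) (x : n → ℝ) :
    ∑ i : n, x i * P.mulVec x i = (P.mulVec x) ⬝ᵥ (P.mulVec x) := by
  have hvm : (P.mulVec x) ᵥ* P = P *ᵥ (P *ᵥ x) := by
    rw [← Matrix.mulVec_transpose, hsym]
  have h1 : (P.mulVec x) ⬝ᵥ (P.mulVec x) = ((P * P).mulVec x) ⬝ᵥ x := by
    rw [Matrix.dotProduct_mulVec, hvm, Matrix.mulVec_mulVec, dotProduct_comm]
  rw [h1, hid, dotProduct_comm]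
  rfl

lemma proj_quad_nonneg (P : Matrix n n ℝ) (hsym : Pᵀ = P) (hid : P * P = P) (x : n → ℝ) :
    0 ≤ ∑ i : n, x i * P.mulVec x i := by
  rw [proj_quad_eq P hsym hid]
  exact Finset.sum_nonneg fun i _ => mul_self_nonneg _

lemma proj_quad_le (P : Matrix n n ℝ) (hsym : Pᵀ = P) (hid : P * P = P) (x : n → ℝ) :
    ∑ i : n, x i * P.mulVec x i ≤ ∑ i : n, (x i)^2 := by
  have key : ∑ i : n, (x i)^2 - ∑ i : n, x i * P.mulVec x i
      = (x - P.mulVec x) ⬝ᵥ (x - P.mulVec x) := by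
    have hq := proj_quad_eq P hsym hid x
    have hdot : x ⬝ᵥ P.mulVec x = ∑ i : n, x i * P.mulVec x i := rfl
    have hxx : x ⬝ᵥ x = ∑ i : n, (x i)^2 := by
      simp [dotProduct, sq]
    rw [sub_dotProduct, dotProduct_sub, dotProduct_sub]
    rw [hxx, ← hq, hdot, dotProduct_comm (P.mulVec x) x, hdot]
    ring
  simp only [dotProduct] at key
  have hpos : (0:ℝ) ≤ ∑ i : n, (x - P.mulVec x) i * (x - P.mulVec x) i :=
    Finset.sum_nonneg fun i _ => mul_self_nonneg _
  linarith

/-- Rayleigh bound for matrices columnwise. -/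
lemma minner_rayleigh (S : Matrix n n ℝ) (A : Matrix n s ℝ) :
    minEig S * matFrobSq A ≤ minner A (S * A) := by
  have h1 : minner A (S * A) = ∑ c : s, ∑ i : n, (fun i => A i c) i *
      (S.mulVec (fun i => A i c)) i := by
    rw [minner, Finset.sum_comm]
    apply Finset.sum_congr rfl; intro c _
    apply Finset.sum_congr rfl; intro i _
    simp [Matrix.mul_apply, Matrix.mulVec, dotProduct]
  have h2 : matFrobSq A = ∑ c : s, ∑ i : n, ((fun i => A i c) i)^2 := by
    rw [matFrobSq, Finset.sum_comm]
  rw [h1, h2, Finset.mul_sum]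
  exact Finset.sum_le_sum fun c _ => rayleigh_le S _

lemma minner_quadform (S : Matrix n n ℝ) (A : Matrix n s ℝ) :
    minner A (S * A) ≤ specNorm S * matFrobSq A := by
  have h1 : minner A (S * A) = ∑ c : s, ∑ i : n, (fun i => A i c) i *
      (S.mulVec (fun i => A i c)) i := by
    rw [minner, Finset.sum_comm]
    apply Finset.sum_congr rfl; intro c _
    apply Finset.sum_congr rfl; intro i _
    simp [Matrix.mul_apply, Matrix.mulVec, dotProduct]
  have h2 : matFrobSq A = ∑ c : s, ∑ i : n, ((fun i => A i c) i)^2 := by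
    rw [matFrobSq, Finset.sum_comm]
  rw [h1, h2, Finset.mul_sum]
  exact Finset.sum_le_sum fun c _ => quadform_le_specNorm S _

/-- For symmetric idempotent `P`: ‖A − P A‖² = ‖A‖² − ⟨A, P A⟩. -/
lemma frobSq_proj_sub (P : Matrix n n ℝ) (hsym : Pᵀ = P) (hid : P * P = P)
    (A : Matrix n s ℝ) :
    matFrobSq (A - P * A) = matFrobSq A - minner A (P * A) := by
  rw [matFrobSq_sub]
  have h3 : matFrobSq (P * A) = minner A (P * A) := by
    rw [← minner_self, minner_mul_left, hsym, ← Matrix.mul_assoc, hid]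
  rw [h3]; ring

end Aux
namespace Tensor
open Aux

variable {I J K : Type*} {p : ℕ}

lemma unfold_sub {S : Type*} (A B : Tensor J S p) :
    unfold (A - B) = unfold A - unfold B := rfl

lemma unfold_tprod [Fintype J] (A : Tensor I J p) {S : Type*} (B : Tensor J S p) :
    unfold (tprod A B) = bcirc A * unfold B := by
  ext ⟨i, k⟩ s
  simp [unfold, tprod, bcirc, Matrix.mul_apply, Fintype.sum_prod_type]

lemma bcirc_ttrans [NeZero p] (A : Tensor I J p) : bcirc (ttrans A) = (bcirc A)ᵀ := by
  ext ⟨j, k⟩ ⟨i, l⟩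
  simp only [bcirc, ttrans, Matrix.transpose_apply, Matrix.of_apply]
  rw [neg_sub]

lemma bcirc_tprod [NeZero p] [Fintype J] (A : Tensor I J p) (B : Tensor J K p) :
    bcirc (tprod A B) = bcirc A * bcirc B := by
  ext ⟨i, k⟩ ⟨j, l⟩
  simp only [bcirc, tprod, Matrix.mul_apply, Matrix.of_apply, Fintype.sum_prod_type]
  apply Finset.sum_congr rfl; intro j' _
  refine Fintype.sum_equiv (Equiv.addRight l) _ _ fun l' => ?_
  simp only [Equiv.coe_addRight]
  congr 1
  · congr 1
    rw [sub_sub, add_comm l l']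
  · congr 1
    rw [add_sub_cancel_right]

lemma bcirc_tid [Fintype I] [DecidableEq I] [NeZero p] :
    bcirc (tid I p) = (1 : Matrix (I × Fin p) (I × Fin p) ℝ) := by
  ext ⟨i, k⟩ ⟨j, l⟩
  simp only [bcirc, tid, Matrix.of_apply, Matrix.one_apply, Prod.mk.injEq]
  by_cases hij : i = j
  · by_cases hkl : k = l
    · simp [hij, hkl, sub_self]
    · have : ¬ ((k - l : Fin p) : ℕ) = 0 := by
        intro h
        have h2 : (k - l : Fin p) = 0 := by rw [Fin.ext_iff]; simpa using h
        exact hkl (sub_eq_zero.mp h2)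
      simp [hij, hkl, this]
  · simp [hij]

lemma tprod_tinv [Fintype I] [DecidableEq I] {S : Tensor I I p} (h : TInvertible S) :
    tprod S (tinv S) = tid I p := by
  rw [tinv, dif_pos h]
  exact h.choose_spec.1

lemma tinv_tprod [Fintype I] [DecidableEq I] {S : Tensor I I p} (h : TInvertible S) :
    tprod (tinv S) S = tid I p := by
  rw [tinv, dif_pos h]
  exact h.choose_spec.2

lemma frobSq_unfold [Fintype I] [Fintype J] (A : Tensor I J p) :
    frobSq A = matFrobSq (unfold A) := by
  rw [frobSq, matFrobSq, Fintype.sum_prod_type]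
  apply Finset.sum_congr rfl; intro i _
  rw [Finset.sum_comm]
  rfl

end Tensor

namespace Aux

variable {n s r c : Type*} [Fintype n] [Fintype s] [Fintype r] [Fintype c]

lemma minner_zero_right (A : Matrix n s ℝ) : minner A (0 : Matrix n s ℝ) = 0 := by
  simp [minner]

/-- least squares normal equation at matrix level -/
lemma ls_normal (A : Matrix n c ℝ) (x0 : Matrix c s ℝ) (y : Matrix n s ℝ)
    (h : ∀ v : Matrix c s ℝ, matFrobSq (A * x0 - y) ≤ matFrobSq (A * v - y)) :
    Aᵀ * (A * x0 - y) = 0 := by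
  have key : ∀ ε : ℝ, 0 ≤ ε^2 * matFrobSq (A * (Aᵀ * (A * x0 - y)))
      - 2 * ε * matFrobSq (Aᵀ * (A * x0 - y)) := by
    intro ε
    have h1 := h (x0 - ε • (Aᵀ * (A * x0 - y)))
    have h2 : A * (x0 - ε • (Aᵀ * (A * x0 - y))) - y
        = (A * x0 - y) - ε • (A * (Aᵀ * (A * x0 - y))) := by
      rw [Matrix.mul_sub, Matrix.mul_smul]; abel
    rw [h2] at h1
    rw [matFrobSq_sub (A * x0 - y) (ε • (A * (Aᵀ * (A * x0 - y))))] at h1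
    have h3 : minner (A * x0 - y) (ε • (A * (Aᵀ * (A * x0 - y))))
        = ε * matFrobSq (Aᵀ * (A * x0 - y)) := by
      rw [minner_smul_right, minner_comm, minner_mul_left, minner_self]
    have h4 : matFrobSq (ε • (A * (Aᵀ * (A * x0 - y))))
        = ε^2 * matFrobSq (A * (Aᵀ * (A * x0 - y))) := by
      simp only [matFrobSq, Matrix.smul_apply, smul_eq_mul, Finset.mul_sum, mul_pow]
    rw [h3, h4] at h1
    linarith
  set cc := matFrobSq (Aᵀ * (A * x0 - y)) with hcc
  set dd := matFrobSq (A * (Aᵀ * (A * x0 - y))) with hdd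
  have hcc0 : 0 ≤ cc := matFrobSq_nonneg _
  have hdd0 : 0 ≤ dd := matFrobSq_nonneg _
  have hc0 : cc = 0 := by
    by_contra hne
    have hcpos : 0 < cc := lt_of_le_of_ne hcc0 (Ne.symm hne)
    have hk := key (cc / (dd + 1))
    have hdp : (0:ℝ) < dd + 1 := by linarith
    have expand : (cc/(dd+1))^2 * dd - 2 * (cc/(dd+1)) * cc
        = (cc^2 * dd - 2 * cc^2 * (dd+1))/(dd+1)^2 := by
      field_simp
    have hneg : (cc/(dd+1))^2 * dd - 2 * (cc/(dd+1)) * cc < 0 := by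
      rw [expand]
      apply div_neg_of_neg_of_pos
      · nlinarith
      · positivity
    linarith
  exact matFrobSq_eq_zero hc0

lemma transpose_sym_inv [DecidableEq n] (S N : Matrix n n ℝ) (hS : Sᵀ = S) (h1 : N * S = 1)
    (h2 : S * N = 1) : Nᵀ = N := by
  have h3 : Nᵀ * Sᵀ = 1 := by rw [← Matrix.transpose_mul, h2, Matrix.transpose_one]
  calc Nᵀ = Nᵀ * (S * N) := by rw [h2, Matrix.mul_one]
  _ = (Nᵀ * Sᵀ) * N := by rw [hS, Matrix.mul_assoc]
  _ = N := by rw [h3, Matrix.one_mul]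

section ProjMat

variable [DecidableEq r] (R : Matrix r c ℝ) (N : Matrix r r ℝ)

lemma projMat_sym (hN : Nᵀ = N) : (Rᵀ * (N * R))ᵀ = Rᵀ * (N * R) := by
  rw [Matrix.transpose_mul, Matrix.transpose_mul, Matrix.transpose_transpose, hN,
    Matrix.mul_assoc]

lemma projMat_absorb (h1 : N * (R * Rᵀ) = 1) {s' : Type*} [Fintype s']
    (w : Matrix r s' ℝ) : (Rᵀ * (N * R)) * (Rᵀ * w) = Rᵀ * w := by
  calc (Rᵀ * (N * R)) * (Rᵀ * w) = Rᵀ * ((N * (R * Rᵀ)) * w) := by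
        rw [Matrix.mul_assoc, Matrix.mul_assoc, Matrix.mul_assoc, Matrix.mul_assoc]
  _ = Rᵀ * w := by rw [h1, Matrix.one_mul]

lemma projMat_idem (h1 : N * (R * Rᵀ) = 1) :
    (Rᵀ * (N * R)) * (Rᵀ * (N * R)) = Rᵀ * (N * R) := projMat_absorb R N h1 (N * R)

end ProjMat

end Aux

namespace Tensor
open Aux

section Steps

variable {m m₁ l p : ℕ} [NeZero p]

lemma bcirc_proj_eq (U : Tensor (Fin m) (Fin m₁) p) (μ : Finset (Fin m)) :
    bcirc (proj (rowSub U μ)) = (bcirc (rowSub U μ))ᵀ *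
      (bcirc (tinv (tprod (rowSub U μ) (ttrans (rowSub U μ)))) * bcirc (rowSub U μ)) := by
  rw [proj, bcirc_tprod, bcirc_tprod, bcirc_ttrans]

lemma stepA (U : Tensor (Fin m) (Fin m₁) p) (Wst : Tensor (Fin m) (Fin l) p) (j : Fin m₁)
    (hlat : bcirc (ttrans (latSlice U j)) * unfold Wst = 0)
    (hinv : TInvertible (tprod (ttrans (latSlice U j)) (latSlice U j)))
    (W : Tensor (Fin m) (Fin l) p) :
    frobSq (extStep U j W - Wst)
      = matFrobSq (unfold W - unfold Wst)
        - Aux.minner (unfold W - unfold Wst)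
            (bcirc (projT (latSlice U j)) * (unfold W - unfold Wst)) := by
  set R := bcirc (ttrans (latSlice U j)) with hRdef
  set M := bcirc (tinv (tprod (ttrans (latSlice U j)) (latSlice U j))) with hMdef
  have hL : bcirc (latSlice U j) = Rᵀ := by
    rw [hRdef, bcirc_ttrans, Matrix.transpose_transpose]
  have hRR : bcirc (tprod (ttrans (latSlice U j)) (latSlice U j)) = R * Rᵀ := by
    rw [bcirc_tprod, hL, ← hRdef]
  have h1 : M * (R * Rᵀ) = 1 := by
    rw [← hRR, hMdef, ← bcirc_tprod, tinv_tprod hinv, bcirc_tid]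
  have h2 : (R * Rᵀ) * M = 1 := by
    rw [← hRR, hMdef, ← bcirc_tprod, tprod_tinv hinv, bcirc_tid]
  have hMsym : Mᵀ = M := transpose_sym_inv (R * Rᵀ) M
    (by rw [Matrix.transpose_mul, Matrix.transpose_transpose]) h1 h2
  have hprojT : bcirc (projT (latSlice U j)) = Rᵀ * (M * R) := by
    rw [projT, bcirc_tprod, bcirc_tprod, hL, ← hMdef, ← hRdef]
  have e : unfold (extStep U j W - Wst)
      = (unfold W - unfold Wst) - (Rᵀ * (M * R)) * (unfold W - unfold Wst) := by
    rw [unfold_sub, extStep, unfold_sub, unfold_tprod, unfold_tprod, unfold_tprod,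
      hL, ← hMdef, ← hRdef]
    rw [show (Rᵀ * (M * R)) * (unfold W - unfold Wst)
        = Rᵀ * (M * (R * (unfold W - unfold Wst))) from by
      rw [Matrix.mul_assoc, Matrix.mul_assoc]]
    rw [show R * (unfold W - unfold Wst) = R * unfold W from by
      rw [Matrix.mul_sub, hlat, sub_zero]]
    abel
  rw [frobSq_unfold, e, hprojT]
  exact frobSq_proj_sub (Rᵀ * (M * R)) (projMat_sym R M hMsym) (projMat_idem R M h1) _

lemma stepB (U : Tensor (Fin m) (Fin m₁) p) (Y Wst : Tensor (Fin m) (Fin l) p)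
    (Xd : Tensor (Fin m₁) (Fin l) p)
    (hY : unfold Y = bcirc U * unfold Xd + unfold Wst)
    (μ : Finset (Fin m)) (hne : μ.Nonempty)
    (hinv : TInvertible (tprod (rowSub U μ) (ttrans (rowSub U μ))))
    (X : Tensor (Fin m₁) (Fin l) p) (W' : Tensor (Fin m) (Fin l) p) :
    frobSq (kaczStep U μ X (rowSub Y μ - rowSub W' μ) - Xd)
      ≤ matFrobSq (unfold X - unfold Xd)
        - Aux.minner (unfold X - unfold Xd)
            (bcirc (proj (rowSub U μ)) * (unfold X - unfold Xd))
        + specNorm ((bcirc (rowSub U μ) * (bcirc (rowSub U μ))ᵀ)⁻¹) *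
            matFrobSq (unfold W' - unfold Wst) := by
  classical
  haveI : Nonempty {i // i ∈ μ} := ⟨⟨hne.choose, hne.choose_spec⟩⟩
  set R := bcirc (rowSub U μ) with hRdef
  set N := bcirc (tinv (tprod (rowSub U μ) (ttrans (rowSub U μ)))) with hNdef
  have hRR : bcirc (tprod (rowSub U μ) (ttrans (rowSub U μ))) = R * Rᵀ := by
    rw [bcirc_tprod, bcirc_ttrans, ← hRdef]
  have h1 : N * (R * Rᵀ) = 1 := by
    rw [← hRR, hNdef, ← bcirc_tprod, tinv_tprod hinv, bcirc_tid]
  have h2 : (R * Rᵀ) * N = 1 := by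
    rw [← hRR, hNdef, ← bcirc_tprod, tprod_tinv hinv, bcirc_tid]
  have hNsym : Nᵀ = N := transpose_sym_inv (R * Rᵀ) N
    (by rw [Matrix.transpose_mul, Matrix.transpose_transpose]) h1 h2
  have hNinv : (R * Rᵀ)⁻¹ = N := Matrix.inv_eq_right_inv h2
  have hproj : bcirc (proj (rowSub U μ)) = Rᵀ * (N * R) := bcirc_proj_eq U μ
  set ρ : Matrix (Fin m × Fin p) (Fin l) ℝ → Matrix ({i // i ∈ μ} × Fin p) (Fin l) ℝ :=
    fun v => Matrix.of fun ik c => v (ik.1.1, ik.2) c with hρ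
  have hrsel_unfold : ∀ (Wt : Tensor (Fin m) (Fin l) p), unfold (rowSub Wt μ) = ρ (unfold Wt) :=
    fun _ => rfl
  have hrsel_mul : ∀ v : Matrix (Fin m₁ × Fin p) (Fin l) ℝ, R * v = ρ (bcirc U * v) := by
    intro v
    ext ⟨i, k⟩ c
    simp [hρ, Matrix.mul_apply, hRdef, bcirc, rowSub]
  have hrsel_le : ∀ v : Matrix (Fin m × Fin p) (Fin l) ℝ, matFrobSq (ρ v) ≤ matFrobSq v := by
    intro v
    rw [matFrobSq, matFrobSq, Fintype.sum_prod_type, Fintype.sum_prod_type]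
    rw [show (∑ i : {i // i ∈ μ}, ∑ k : Fin p, ∑ c : Fin l, (ρ v (i, k) c)^2)
        = ∑ i ∈ μ, ∑ k : Fin p, ∑ c : Fin l, (v (i, k) c)^2 from by
      rw [← Finset.sum_attach μ (fun i => ∑ k : Fin p, ∑ c : Fin l, (v (i, k) c)^2)]
      rfl]
    refine Finset.sum_le_sum_of_subset_of_nonneg (Finset.subset_univ μ) ?_
    intro i _ _
    apply Finset.sum_nonneg; intro k _
    apply Finset.sum_nonneg; intro c _
    positivity
  have hB : R * unfold X - unfold (rowSub Y μ - rowSub W' μ)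
      = R * (unfold X - unfold Xd) + ρ (unfold W' - unfold Wst) := by
    rw [Matrix.mul_sub, hrsel_mul (unfold X), hrsel_mul (unfold Xd),
        unfold_sub (rowSub Y μ) (rowSub W' μ), hrsel_unfold, hrsel_unfold, hY]
    ext ⟨i, k⟩ c
    simp only [hρ, Matrix.of_apply, Matrix.sub_apply, Matrix.add_apply]
    ring
  have e1 : unfold (kaczStep U μ X (rowSub Y μ - rowSub W' μ) - Xd)
      = ((unfold X - unfold Xd) - (Rᵀ * (N * R)) * (unfold X - unfold Xd))
        - Rᵀ * (N * (ρ (unfold W' - unfold Wst))) := by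
    rw [unfold_sub, kaczStep, unfold_sub, unfold_tprod, unfold_tprod, unfold_sub,
      unfold_tprod, bcirc_ttrans, ← hRdef, ← hNdef, hB, Matrix.mul_add, Matrix.mul_add]
    rw [show (Rᵀ * (N * R)) * (unfold X - unfold Xd)
        = Rᵀ * (N * (R * (unfold X - unfold Xd))) from by
      rw [Matrix.mul_assoc, Matrix.mul_assoc]]
    abel
  rw [frobSq_unfold, e1, matFrobSq_sub]
  have hcross : minner ((unfold X - unfold Xd) - (Rᵀ * (N * R)) * (unfold X - unfold Xd))
      (Rᵀ * (N * (ρ (unfold W' - unfold Wst)))) = 0 := by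
    rw [minner_sub_left]
    rw [minner_mul_left (Rᵀ * (N * R)) (unfold X - unfold Xd)
      (Rᵀ * (N * (ρ (unfold W' - unfold Wst))))]
    rw [projMat_sym R N hNsym, projMat_absorb R N h1 (N * (ρ (unfold W' - unfold Wst)))]
    ring
  have hct : matFrobSq (Rᵀ * (N * (ρ (unfold W' - unfold Wst)))) ≤
      specNorm ((R * Rᵀ)⁻¹) * matFrobSq (ρ (unfold W' - unfold Wst)) := by
    rw [← minner_self, minner_mul_left Rᵀ (N * (ρ (unfold W' - unfold Wst)))
      (Rᵀ * (N * (ρ (unfold W' - unfold Wst)))), Matrix.transpose_transpose]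
    rw [show R * (Rᵀ * (N * (ρ (unfold W' - unfold Wst))))
        = ((R * Rᵀ) * N) * (ρ (unfold W' - unfold Wst)) from by
      rw [Matrix.mul_assoc, Matrix.mul_assoc]]
    rw [h2, Matrix.one_mul]
    rw [minner_mul_left N (ρ (unfold W' - unfold Wst)) (ρ (unfold W' - unfold Wst)), hNsym]
    rw [hNinv]
    exact minner_quadform N _
  have hfs : matFrobSq ((unfold X - unfold Xd) - (Rᵀ * (N * R)) * (unfold X - unfold Xd))
      = matFrobSq (unfold X - unfold Xd)
        - minner (unfold X - unfold Xd) ((Rᵀ * (N * R)) * (unfold X - unfold Xd)) :=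
    frobSq_proj_sub _ (projMat_sym R N hNsym) (projMat_idem R N h1) _
  have hspec0 : 0 ≤ specNorm ((R * Rᵀ)⁻¹) := by
    rw [hNinv]; exact specNorm_nonneg N
  have hz0le : matFrobSq (ρ (unfold W' - unfold Wst)) ≤ matFrobSq (unfold W' - unfold Wst) :=
    hrsel_le _
  rw [hcross, hfs, hproj]
  have hmul := mul_le_mul_of_nonneg_left hz0le hspec0
  linarith [hct, hmul]

end Steps
end Tensor

namespace Aux

variable {n s' ι : Type*} [Fintype n] [Fintype s']

lemma sum_mulVec (s : Finset ι) (A : ι → Matrix n n ℝ) (v : n → ℝ) :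
    Matrix.mulVec (∑ i ∈ s, A i) v = ∑ i ∈ s, Matrix.mulVec (A i) v := by
  ext k
  simp only [Matrix.mulVec, dotProduct, Finset.sum_apply, Matrix.sum_apply,
    Finset.sum_mul]
  exact Finset.sum_comm

lemma minner_sum_right (s : Finset ι) (A : Matrix n s' ℝ) (B : ι → Matrix n s' ℝ) :
    minner A (∑ i ∈ s, B i) = ∑ i ∈ s, minner A (B i) := by
  simp [minner_eq_trace, Matrix.mul_sum]

lemma minner_sum_smul (s : Finset ι) (c : ι → ℝ) (P : ι → Matrix n n ℝ)
    (A : Matrix n s' ℝ) :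
    minner A ((∑ i ∈ s, c i • P i) * A) = ∑ i ∈ s, c i * minner A (P i * A) := by
  rw [Matrix.sum_mul, minner_sum_right]
  apply Finset.sum_congr rfl; intro i _
  rw [Matrix.smul_mul, minner_smul_right]

lemma minEig_convex_le_one [Nonempty n] (s : Finset ι) (c : ι → ℝ)
    (hc : ∀ i ∈ s, 0 ≤ c i) (hsum : ∑ i ∈ s, c i = 1) (P : ι → Matrix n n ℝ)
    (hsym : ∀ i ∈ s, (P i)ᵀ = P i) (hid : ∀ i ∈ s, P i * P i = P i) :
    minEig (∑ i ∈ s, c i • P i) ≤ 1 := by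
  classical
  obtain ⟨i0⟩ := ‹Nonempty n›
  set x : n → ℝ := Pi.single i0 1 with hx
  have hxsum : ∑ i : n, (x i)^2 = 1 := by
    rw [Finset.sum_eq_single i0]
    · simp [hx]
    · intro b _ hb; simp [hx, Pi.single_eq_of_ne hb]
    · intro h; exact absurd (Finset.mem_univ i0) h
  have hmem : (∑ i : n, x i * (∑ j ∈ s, c j • P j).mulVec x i) ∈
      {r : ℝ | ∃ y : n → ℝ, (∑ i : n, (y i) ^ 2) = 1 ∧
        r = ∑ i : n, y i * (∑ j ∈ s, c j • P j).mulVec x i} := ⟨x, hxsum, rfl⟩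
  have hle : minEig (∑ j ∈ s, c j • P j) ≤
      ∑ i : n, x i * (∑ j ∈ s, c j • P j).mulVec x i :=
    csInf_le (rayleigh_bddBelow _) ⟨x, hxsum, rfl⟩
  have hval : ∑ i : n, x i * (∑ j ∈ s, c j • P j).mulVec x i
      = ∑ j ∈ s, c j * (∑ i : n, x i * (P j).mulVec x i) := by
    rw [sum_mulVec]
    rw [show (∑ i : n, x i * (∑ j ∈ s, Matrix.mulVec (c j • P j) x) i)
        = ∑ j ∈ s, ∑ i : n, x i * Matrix.mulVec (c j • P j) x i from by
      rw [Finset.sum_comm]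
      apply Finset.sum_congr rfl; intro i _
      rw [Finset.sum_apply, Finset.mul_sum]]
    apply Finset.sum_congr rfl; intro j _
    rw [Matrix.smul_mulVec, Finset.mul_sum]
    apply Finset.sum_congr rfl; intro i _
    simp [Pi.smul_apply, smul_eq_mul]; ring
  have hbound : ∑ j ∈ s, c j * (∑ i : n, x i * (P j).mulVec x i) ≤ 1 := by
    rw [← hsum]
    refine Finset.sum_le_sum fun j hj => ?_
    have h1 : ∑ i : n, x i * (P j).mulVec x i ≤ 1 := by
      have := proj_quad_le (P j) (hsym j hj) (hid j hj) x
      rwa [hxsum] at this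
    have h0 := proj_quad_nonneg (P j) (hsym j hj) (hid j hj) x
    calc c j * (∑ i : n, x i * (P j).mulVec x i) ≤ c j * 1 :=
      mul_le_mul_of_nonneg_left h1 (hc j hj)
    _ = c j := mul_one _
  rw [hval] at hle
  linarith

end Aux

namespace Tensor
open Aux

section Agg

variable {m m₁ l p : ℕ} [NeZero p]

lemma frobSq_nonneg' {I J : Type*} [Fintype I] [Fintype J] (A : Tensor I J p) :
    0 ≤ frobSq A := by
  apply Finset.sum_nonneg; intro i _
  apply Finset.sum_nonneg; intro j _
  apply Finset.sum_nonneg; intro k _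
  positivity

lemma proj_bcirc_sym_idem (U : Tensor (Fin m) (Fin m₁) p) (μ : Finset (Fin m))
    (hinv : TInvertible (tprod (rowSub U μ) (ttrans (rowSub U μ)))) :
    (bcirc (proj (rowSub U μ)))ᵀ = bcirc (proj (rowSub U μ)) ∧
      bcirc (proj (rowSub U μ)) * bcirc (proj (rowSub U μ)) = bcirc (proj (rowSub U μ)) := by
  classical
  set R := bcirc (rowSub U μ) with hRdef
  set N := bcirc (tinv (tprod (rowSub U μ) (ttrans (rowSub U μ)))) with hNdef
  have hRR : bcirc (tprod (rowSub U μ) (ttrans (rowSub U μ))) = R * Rᵀ := by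
    rw [bcirc_tprod, bcirc_ttrans, ← hRdef]
  have h1 : N * (R * Rᵀ) = 1 := by
    rw [← hRR, hNdef, ← bcirc_tprod, tinv_tprod hinv, bcirc_tid]
  have h2 : (R * Rᵀ) * N = 1 := by
    rw [← hRR, hNdef, ← bcirc_tprod, tprod_tinv hinv, bcirc_tid]
  have hNsym : Nᵀ = N := transpose_sym_inv (R * Rᵀ) N
    (by rw [Matrix.transpose_mul, Matrix.transpose_transpose]) h1 h2
  rw [bcirc_proj_eq U μ, ← hRdef, ← hNdef]
  exact ⟨projMat_sym R N hNsym, projMat_idem R N h1⟩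

lemma projT_bcirc_sym_idem (U : Tensor (Fin m) (Fin m₁) p) (j : Fin m₁)
    (hinv : TInvertible (tprod (ttrans (latSlice U j)) (latSlice U j))) :
    (bcirc (projT (latSlice U j)))ᵀ = bcirc (projT (latSlice U j)) ∧
      bcirc (projT (latSlice U j)) * bcirc (projT (latSlice U j))
        = bcirc (projT (latSlice U j)) := by
  classical
  set R := bcirc (ttrans (latSlice U j)) with hRdef
  set M := bcirc (tinv (tprod (ttrans (latSlice U j)) (latSlice U j))) with hMdef
  have hL : bcirc (latSlice U j) = Rᵀ := by
    rw [hRdef, bcirc_ttrans, Matrix.transpose_transpose]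
  have hRR : bcirc (tprod (ttrans (latSlice U j)) (latSlice U j)) = R * Rᵀ := by
    rw [bcirc_tprod, hL, ← hRdef]
  have h1 : M * (R * Rᵀ) = 1 := by
    rw [← hRR, hMdef, ← bcirc_tprod, tinv_tprod hinv, bcirc_tid]
  have h2 : (R * Rᵀ) * M = 1 := by
    rw [← hRR, hMdef, ← bcirc_tprod, tprod_tinv hinv, bcirc_tid]
  have hMsym : Mᵀ = M := transpose_sym_inv (R * Rᵀ) M
    (by rw [Matrix.transpose_mul, Matrix.transpose_transpose]) h1 h2
  have hprojT : bcirc (projT (latSlice U j)) = Rᵀ * (M * R) := by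
    rw [projT, bcirc_tprod, bcirc_tprod, hL, ← hMdef, ← hRdef]
  rw [hprojT]
  exact ⟨projMat_sym R M hMsym, projMat_idem R M h1⟩

lemma aggA (U : Tensor (Fin m) (Fin m₁) p) (Wst : Tensor (Fin m) (Fin l) p)
    (q : Fin m₁ → ℝ) (hq : ∀ j, 0 ≤ q j) (hqsum : ∑ j, q j = 1)
    (hlat : ∀ j, bcirc (ttrans (latSlice U j)) * unfold Wst = 0)
    (hinvcol : ∀ j, TInvertible (tprod (ttrans (latSlice U j)) (latSlice U j)))
    (βU : ℝ) (hβU : βU = 1 - minEig (∑ j : Fin m₁, q j • bcirc (projT (latSlice U j))))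
    (W : Tensor (Fin m) (Fin l) p) :
    ∑ j : Fin m₁, q j * frobSq (extStep U j W - Wst) ≤ βU * frobSq (W - Wst) := by
  have hstep : ∀ j : Fin m₁, frobSq (extStep U j W - Wst)
      = matFrobSq (unfold W - unfold Wst)
        - Aux.minner (unfold W - unfold Wst)
            (bcirc (projT (latSlice U j)) * (unfold W - unfold Wst)) :=
    fun j => stepA U Wst j (hlat j) (hinvcol j) W
  have hsum : ∑ j : Fin m₁, q j * frobSq (extStep U j W - Wst)
      = matFrobSq (unfold W - unfold Wst)
        - Aux.minner (unfold W - unfold Wst)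
            ((∑ j : Fin m₁, q j • bcirc (projT (latSlice U j))) * (unfold W - unfold Wst)) := by
    rw [minner_sum_smul]
    rw [show (∑ j : Fin m₁, q j * frobSq (extStep U j W - Wst))
        = ∑ j : Fin m₁, (q j * matFrobSq (unfold W - unfold Wst)
            - q j * Aux.minner (unfold W - unfold Wst)
              (bcirc (projT (latSlice U j)) * (unfold W - unfold Wst))) from by
      apply Finset.sum_congr rfl; intro j _
      rw [hstep j]; ring]
    rw [Finset.sum_sub_distrib, ← Finset.sum_mul, hqsum, one_mul]
  rw [hsum]
  have hray := minner_rayleigh (∑ j : Fin m₁, q j • bcirc (projT (latSlice U j)))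
    (unfold W - unfold Wst)
  have hfrob : frobSq (W - Wst) = matFrobSq (unfold W - unfold Wst) := by
    rw [frobSq_unfold, unfold_sub]
  rw [hfrob, hβU]
  have h0 : 0 ≤ matFrobSq (unfold W - unfold Wst) := matFrobSq_nonneg _
  nlinarith [hray]

lemma aggB (U : Tensor (Fin m) (Fin m₁) p) (Y Wst : Tensor (Fin m) (Fin l) p)
    (Xd : Tensor (Fin m₁) (Fin l) p)
    (hY : unfold Y = bcirc U * unfold Xd + unfold Wst)
    (TU : Finset (Finset (Fin m))) (hTUne : ∀ μ ∈ TU, μ.Nonempty)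
    (probU : Finset (Fin m) → ℝ) (hprob : ∀ μ ∈ TU, 0 ≤ probU μ)
    (hprobsum : ∑ μ ∈ TU, probU μ = 1)
    (hinvrow : ∀ μ ∈ TU, TInvertible (tprod (rowSub U μ) (ttrans (rowSub U μ))))
    (αU : ℝ) (hαU : αU = 1 - minEig (∑ μ ∈ TU, probU μ • bcirc (proj (rowSub U μ))))
    (X : Tensor (Fin m₁) (Fin l) p) (W' : Tensor (Fin m) (Fin l) p) :
    ∑ μ ∈ TU, probU μ * frobSq (kaczStep U μ X (rowSub Y μ - rowSub W' μ) - Xd)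
      ≤ αU * frobSq (X - Xd) +
        (∑ μ ∈ TU, probU μ * specNorm ((bcirc (rowSub U μ) * (bcirc (rowSub U μ))ᵀ)⁻¹)) *
          frobSq (W' - Wst) := by
  have hfrobX : frobSq (X - Xd) = matFrobSq (unfold X - unfold Xd) := by
    rw [frobSq_unfold, unfold_sub]
  have hfrobW : frobSq (W' - Wst) = matFrobSq (unfold W' - unfold Wst) := by
    rw [frobSq_unfold, unfold_sub]
  have hub : ∑ μ ∈ TU, probU μ * frobSq (kaczStep U μ X (rowSub Y μ - rowSub W' μ) - Xd)
      ≤ ∑ μ ∈ TU, probU μ * (matFrobSq (unfold X - unfold Xd)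
          - Aux.minner (unfold X - unfold Xd)
              (bcirc (proj (rowSub U μ)) * (unfold X - unfold Xd))
          + specNorm ((bcirc (rowSub U μ) * (bcirc (rowSub U μ))ᵀ)⁻¹) *
              matFrobSq (unfold W' - unfold Wst)) := by
    refine Finset.sum_le_sum fun μ hμ => ?_
    exact mul_le_mul_of_nonneg_left
      (stepB U Y Wst Xd hY μ (hTUne μ hμ) (hinvrow μ hμ) X W') (hprob μ hμ)
  have hexp : ∑ μ ∈ TU, probU μ * (matFrobSq (unfold X - unfold Xd)
      - Aux.minner (unfold X - unfold Xd)
          (bcirc (proj (rowSub U μ)) * (unfold X - unfold Xd))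
      + specNorm ((bcirc (rowSub U μ) * (bcirc (rowSub U μ))ᵀ)⁻¹) *
          matFrobSq (unfold W' - unfold Wst))
      = matFrobSq (unfold X - unfold Xd)
        - Aux.minner (unfold X - unfold Xd)
            ((∑ μ ∈ TU, probU μ • bcirc (proj (rowSub U μ))) * (unfold X - unfold Xd))
        + (∑ μ ∈ TU, probU μ * specNorm ((bcirc (rowSub U μ) * (bcirc (rowSub U μ))ᵀ)⁻¹)) *
            matFrobSq (unfold W' - unfold Wst) := by
    rw [minner_sum_smul]
    rw [show (∑ μ ∈ TU, probU μ * (matFrobSq (unfold X - unfold Xd)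
        - Aux.minner (unfold X - unfold Xd)
            (bcirc (proj (rowSub U μ)) * (unfold X - unfold Xd))
        + specNorm ((bcirc (rowSub U μ) * (bcirc (rowSub U μ))ᵀ)⁻¹) *
            matFrobSq (unfold W' - unfold Wst)))
        = ∑ μ ∈ TU, (probU μ * matFrobSq (unfold X - unfold Xd)
            - probU μ * Aux.minner (unfold X - unfold Xd)
                (bcirc (proj (rowSub U μ)) * (unfold X - unfold Xd))
            + probU μ * specNorm ((bcirc (rowSub U μ) * (bcirc (rowSub U μ))ᵀ)⁻¹) *
                matFrobSq (unfold W' - unfold Wst)) from by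
      apply Finset.sum_congr rfl; intro μ _; ring]
    rw [Finset.sum_add_distrib, Finset.sum_sub_distrib, ← Finset.sum_mul, hprobsum, one_mul,
      ← Finset.sum_mul]
  rw [hfrobX, hfrobW, hαU]
  have hray := minner_rayleigh (∑ μ ∈ TU, probU μ • bcirc (proj (rowSub U μ)))
    (unfold X - unfold Xd)
  have h0 : 0 ≤ matFrobSq (unfold X - unfold Xd) := matFrobSq_nonneg _
  calc ∑ μ ∈ TU, probU μ * frobSq (kaczStep U μ X (rowSub Y μ - rowSub W' μ) - Xd)
      ≤ _ := hub
  _ = _ := hexp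
  _ ≤ (1 - minEig (∑ μ ∈ TU, probU μ • bcirc (proj (rowSub U μ))))
        * matFrobSq (unfold X - unfold Xd)
      + (∑ μ ∈ TU, probU μ * specNorm ((bcirc (rowSub U μ) * (bcirc (rowSub U μ))ᵀ)⁻¹)) *
          matFrobSq (unfold W' - unfold Wst) := by nlinarith [hray]

end Agg
end Tensor

namespace Aux

lemma sum_split {S : Type*} [Fintype S] (t : ℕ) (f : (Fin (t+1) → S) → ℝ) :
    (∑ ω : Fin (t+1) → S, f ω) = ∑ ω : Fin t → S, ∑ a : S, f (Fin.snoc ω a) := by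
  rw [← (Fin.snocEquiv (fun _ => S)).sum_comp, Fintype.sum_prod_type, Finset.sum_comm]
  rfl

lemma prod_snoc {S : Type*} (wt : S → ℝ) (t : ℕ) (ω : Fin t → S) (a : S) :
    (∏ s : Fin (t+1), wt ((Fin.snoc ω a : Fin (t+1) → S) s))
      = (∏ s : Fin t, wt (ω s)) * wt a := by
  rw [Fin.prod_univ_castSucc]
  congr 1
  · exact Finset.prod_congr rfl fun i _ => by rw [Fin.snoc_castSucc]
  · rw [Fin.snoc_last]

end Aux

namespace Tensor
open Aux

section Assemble

variable {m m₁ l p : ℕ} [NeZero p]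

lemma stepW (U : Tensor (Fin m) (Fin m₁) p) (Y Wst : Tensor (Fin m) (Fin l) p)
    (q : Fin m₁ → ℝ) (hq : ∀ j, 0 ≤ q j) (hqsum : ∑ j, q j = 1)
    (hlat : ∀ j, bcirc (ttrans (latSlice U j)) * unfold Wst = 0)
    (hinvcol : ∀ j, TInvertible (tprod (ttrans (latSlice U j)) (latSlice U j)))
    (βU : ℝ) (hβU : βU = 1 - minEig (∑ j : Fin m₁, q j • bcirc (projT (latSlice U j))))
    (TU : Finset (Finset (Fin m))) (probU : Finset (Fin m) → ℝ)
    (hprobsum : ∑ μ ∈ TU, probU μ = 1)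
    (st : Tensor (Fin m) (Fin l) p × Tensor (Fin m₁) (Fin l) p) :
    ∑ a : Fin m₁ × {μ : Finset (Fin m) // μ ∈ TU},
        (q a.1 * probU a.2.1) * frobSq ((tbrekStep U Y st (a.1, a.2.1)).1 - Wst)
      ≤ βU * frobSq (st.1 - Wst) := by
  rw [Fintype.sum_prod_type]
  have hsub : (∑ μs : {μ : Finset (Fin m) // μ ∈ TU}, probU μs.1) = 1 := by
    rw [Finset.sum_coe_sort TU probU, hprobsum]
  have h1 : ∀ j : Fin m₁, ∑ μs : {μ : Finset (Fin m) // μ ∈ TU},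
      (q j * probU μs.1) * frobSq ((tbrekStep U Y st (j, μs.1)).1 - Wst)
      = q j * frobSq (extStep U j st.1 - Wst) := by
    intro j
    have heq : ∀ μs : {μ : Finset (Fin m) // μ ∈ TU},
        (tbrekStep U Y st (j, μs.1)).1 = extStep U j st.1 := fun _ => rfl
    calc ∑ μs : {μ : Finset (Fin m) // μ ∈ TU},
        (q j * probU μs.1) * frobSq ((tbrekStep U Y st (j, μs.1)).1 - Wst)
        = ∑ μs : {μ : Finset (Fin m) // μ ∈ TU},
            probU μs.1 * (q j * frobSq (extStep U j st.1 - Wst)) :=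
          Finset.sum_congr rfl fun μs _ => by rw [heq μs]; ring
    _ = (∑ μs : {μ : Finset (Fin m) // μ ∈ TU}, probU μs.1)
          * (q j * frobSq (extStep U j st.1 - Wst)) := by rw [Finset.sum_mul]
    _ = q j * frobSq (extStep U j st.1 - Wst) := by rw [hsub, one_mul]
  calc ∑ j : Fin m₁, ∑ μs : {μ : Finset (Fin m) // μ ∈ TU},
      (q j * probU μs.1) * frobSq ((tbrekStep U Y st (j, μs.1)).1 - Wst)
      = ∑ j : Fin m₁, q j * frobSq (extStep U j st.1 - Wst) :=
        Finset.sum_congr rfl fun j _ => h1 j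
  _ ≤ βU * frobSq (st.1 - Wst) := aggA U Wst q hq hqsum hlat hinvcol βU hβU st.1

lemma stepX (U : Tensor (Fin m) (Fin m₁) p) (Y Wst : Tensor (Fin m) (Fin l) p)
    (Xd : Tensor (Fin m₁) (Fin l) p)
    (hY : unfold Y = bcirc U * unfold Xd + unfold Wst)
    (q : Fin m₁ → ℝ) (hq : ∀ j, 0 ≤ q j) (hqsum : ∑ j, q j = 1)
    (hlat : ∀ j, bcirc (ttrans (latSlice U j)) * unfold Wst = 0)
    (hinvcol : ∀ j, TInvertible (tprod (ttrans (latSlice U j)) (latSlice U j)))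
    (TU : Finset (Finset (Fin m))) (hTUne : ∀ μ ∈ TU, μ.Nonempty)
    (probU : Finset (Fin m) → ℝ) (hprob : ∀ μ ∈ TU, 0 ≤ probU μ)
    (hprobsum : ∑ μ ∈ TU, probU μ = 1)
    (hinvrow : ∀ μ ∈ TU, TInvertible (tprod (rowSub U μ) (ttrans (rowSub U μ))))
    (αU βU : ℝ)
    (hαU : αU = 1 - minEig (∑ μ ∈ TU, probU μ • bcirc (proj (rowSub U μ))))
    (hβU : βU = 1 - minEig (∑ j : Fin m₁, q j • bcirc (projT (latSlice U j))))
    (hθ0 : 0 ≤ ∑ μ ∈ TU, probU μ * specNorm ((bcirc (rowSub U μ) * (bcirc (rowSub U μ))ᵀ)⁻¹))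
    (st : Tensor (Fin m) (Fin l) p × Tensor (Fin m₁) (Fin l) p) :
    ∑ a : Fin m₁ × {μ : Finset (Fin m) // μ ∈ TU},
        (q a.1 * probU a.2.1) * frobSq ((tbrekStep U Y st (a.1, a.2.1)).2 - Xd)
      ≤ αU * frobSq (st.2 - Xd) +
        (∑ μ ∈ TU, probU μ * specNorm ((bcirc (rowSub U μ) * (bcirc (rowSub U μ))ᵀ)⁻¹)) *
          (βU * frobSq (st.1 - Wst)) := by
  set θ'' := ∑ μ ∈ TU, probU μ * specNorm ((bcirc (rowSub U μ) * (bcirc (rowSub U μ))ᵀ)⁻¹)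
    with hθ''
  rw [Fintype.sum_prod_type]
  have h1 : ∀ j : Fin m₁, ∑ μs : {μ : Finset (Fin m) // μ ∈ TU},
      (q j * probU μs.1) * frobSq ((tbrekStep U Y st (j, μs.1)).2 - Xd)
      ≤ q j * (αU * frobSq (st.2 - Xd) + θ'' * frobSq (extStep U j st.1 - Wst)) := by
    intro j
    have heq : ∀ μs : {μ : Finset (Fin m) // μ ∈ TU},
        (tbrekStep U Y st (j, μs.1)).2
          = kaczStep U μs.1 st.2 (rowSub Y μs.1 - rowSub (extStep U j st.1) μs.1) :=
      fun _ => rfl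
    have hc : ∑ μs : {μ : Finset (Fin m) // μ ∈ TU},
        (q j * probU μs.1) * frobSq ((tbrekStep U Y st (j, μs.1)).2 - Xd)
        = q j * ∑ μ ∈ TU, probU μ *
            frobSq (kaczStep U μ st.2 (rowSub Y μ - rowSub (extStep U j st.1) μ) - Xd) := by
      rw [Finset.mul_sum]
      rw [← Finset.sum_coe_sort TU (fun μ => q j * (probU μ *
        frobSq (kaczStep U μ st.2 (rowSub Y μ - rowSub (extStep U j st.1) μ) - Xd)))]
      exact Finset.sum_congr rfl fun μs _ => by rw [heq μs]; ring
    rw [hc]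
    have hagg := aggB U Y Wst Xd hY TU hTUne probU hprob hprobsum hinvrow αU hαU
      st.2 (extStep U j st.1)
    exact mul_le_mul_of_nonneg_left hagg (hq j)
  calc ∑ j : Fin m₁, ∑ μs : {μ : Finset (Fin m) // μ ∈ TU},
      (q j * probU μs.1) * frobSq ((tbrekStep U Y st (j, μs.1)).2 - Xd)
      ≤ ∑ j : Fin m₁, q j * (αU * frobSq (st.2 - Xd)
          + θ'' * frobSq (extStep U j st.1 - Wst)) :=
        Finset.sum_le_sum fun j _ => h1 j
  _ = (∑ j : Fin m₁, q j) * (αU * frobSq (st.2 - Xd))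
        + θ'' * ∑ j : Fin m₁, q j * frobSq (extStep U j st.1 - Wst) := by
      rw [Finset.sum_mul, Finset.mul_sum, ← Finset.sum_add_distrib]
      exact Finset.sum_congr rfl fun j _ => by ring
  _ ≤ (∑ j : Fin m₁, q j) * (αU * frobSq (st.2 - Xd)) + θ'' * (βU * frobSq (st.1 - Wst)) := by
      have := aggA U Wst q hq hqsum hlat hinvcol βU hβU st.1
      have h2 := mul_le_mul_of_nonneg_left this hθ0
      linarith
  _ = αU * frobSq (st.2 - Xd) + θ'' * (βU * frobSq (st.1 - Wst)) := by
      rw [hqsum, one_mul]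

end Assemble
end Tensor

open Tensor in
/-- recursion bound for TBREK:
`E‖X^t − X‡‖_F² ≤ α_U^t ‖X‡‖_F² + θ_U (Σ_{s=1}^t β_U^s α_U^{t−s}) ‖U∗X‡‖_F²`. -/
theorem stmt9 {m m₁ l p : ℕ} (U : Tensor (Fin m) (Fin m₁) p)
    (Y : Tensor (Fin m) (Fin l) p) (Xd : Tensor (Fin m₁) (Fin l) p)
    (hXd : ∀ X : Tensor (Fin m₁) (Fin l) p,
      frobSq (tprod U Xd - Y) ≤ frobSq (tprod U X - Y))
    (hXduniq : ∀ X : Tensor (Fin m₁) (Fin l) p,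
      (∀ X' : Tensor (Fin m₁) (Fin l) p,
        frobSq (tprod U X - Y) ≤ frobSq (tprod U X' - Y)) → X = Xd)
    (q : Fin m₁ → ℝ) (hq : ∀ j, 0 ≤ q j) (hqsum : ∑ j, q j = 1)
    (hinvcol : ∀ j : Fin m₁, TInvertible (tprod (ttrans (latSlice U j)) (latSlice U j)))
    (TU : Finset (Finset (Fin m))) (hTUne : ∀ μ ∈ TU, μ.Nonempty)
    (probU : Finset (Fin m) → ℝ) (hprob : ∀ μ ∈ TU, 0 ≤ probU μ)
    (hprobsum : ∑ μ ∈ TU, probU μ = 1)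
    (hinvrow : ∀ μ ∈ TU, TInvertible (tprod (rowSub U μ) (ttrans (rowSub U μ))))
    (αU βU θU : ℝ)
    (hαU : αU = 1 - minEig (∑ μ ∈ TU, probU μ • bcirc (proj (rowSub U μ))))
    (hβU : βU = 1 - minEig (∑ j : Fin m₁, q j • bcirc (projT (latSlice U j))))
    (hθU : θU = ((TU.sup Finset.card : ℕ) : ℝ) * p *
      ∑ μ ∈ TU, probU μ * specNorm ((bcirc (rowSub U μ) * (bcirc (rowSub U μ))ᵀ)⁻¹))
    (t : ℕ) :
    ∑ ω : Fin t → Fin m₁ × {μ : Finset (Fin m) // μ ∈ TU},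
        (∏ s : Fin t, q (ω s).1 * probU (ω s).2.1) *
          frobSq ((tbrekIter U Y (List.ofFn fun s => ((ω s).1, (ω s).2.1))).2 - Xd) ≤
      αU ^ t * frobSq Xd +
        θU * (∑ s ∈ Finset.Icc 1 t, βU ^ s * αU ^ (t - s)) * frobSq (tprod U Xd) := by
  classical
  rcases Nat.eq_zero_or_pos p with hp0 | hp0
  · subst hp0
    simp [frobSq]
  haveI : NeZero p := ⟨hp0.ne'⟩
  have hm₁pos : 0 < m₁ := by
    rcases Nat.eq_zero_or_pos m₁ with h0 | h; swap; exact h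
    exfalso; subst h0; simp at hqsum
  haveI : Nonempty (Fin m₁ × Fin p) := ⟨(⟨0, hm₁pos⟩, ⟨0, hp0⟩)⟩
  have hTUnonempty : TU.Nonempty := by
    by_contra h
    rw [Finset.not_nonempty_iff_eq_empty] at h
    subst h; simp at hprobsum
  -- residual tensor
  set Wst : Tensor (Fin m) (Fin l) p := Y - tprod U Xd with hWstdef
  have hY : unfold Y = bcirc U * unfold Xd + unfold Wst := by
    rw [hWstdef, unfold_sub, unfold_tprod]; abel
  -- normal equations
  have hls : ∀ v : Matrix (Fin m₁ × Fin p) (Fin l) ℝ,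
      matFrobSq (bcirc U * unfold Xd - unfold Y) ≤ matFrobSq (bcirc U * v - unfold Y) := by
    intro v
    have h := hXd (fun j s k => v (j, k) s)
    rw [frobSq_unfold, frobSq_unfold, unfold_sub, unfold_sub, unfold_tprod, unfold_tprod] at h
    exact h
  have hnormal := Aux.ls_normal (bcirc U) (unfold Xd) (unfold Y) hls
  have hWst0 : (bcirc U)ᵀ * unfold Wst = 0 := by
    have hu : unfold Wst = -(bcirc U * unfold Xd - unfold Y) := by
      rw [hWstdef, unfold_sub, unfold_tprod]; abel
    rw [hu, Matrix.mul_neg, hnormal, neg_zero]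
  have hlat : ∀ j : Fin m₁, bcirc (ttrans (latSlice U j)) * unfold Wst = 0 := by
    intro j
    ext ⟨z, k⟩ c
    have h0 := congrFun (congrFun hWst0 (j, k)) c
    simp only [Matrix.mul_apply, Matrix.transpose_apply, Matrix.zero_apply, bcirc, ttrans,
      latSlice, unfold, Matrix.of_apply] at h0 ⊢
    simp only [neg_sub]
    exact h0
  -- constants
  set θ'' := ∑ μ ∈ TU, probU μ * specNorm ((bcirc (rowSub U μ) * (bcirc (rowSub U μ))ᵀ)⁻¹)
    with hθ''def
  have hθ''0 : 0 ≤ θ'' := by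
    rw [hθ''def]
    refine Finset.sum_nonneg fun μ hμ => mul_nonneg (hprob μ hμ) ?_
    haveI : Nonempty ({i // i ∈ μ} × Fin p) :=
      ⟨(⟨(hTUne μ hμ).choose, (hTUne μ hμ).choose_spec⟩, ⟨0, hp0⟩)⟩
    exact Aux.specNorm_nonneg _
  have hα0 : 0 ≤ αU := by
    rw [hαU]
    have h := Aux.minEig_convex_le_one (n := Fin m₁ × Fin p) TU probU hprob hprobsum
      (fun μ => bcirc (proj (rowSub U μ)))
      (fun μ hμ => (proj_bcirc_sym_idem U μ (hinvrow μ hμ)).1)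
      (fun μ hμ => (proj_bcirc_sym_idem U μ (hinvrow μ hμ)).2)
    linarith
  obtain ⟨μ0, hμ0⟩ := hTUnonempty
  haveI : Nonempty (Fin m × Fin p) := ⟨((hTUne μ0 hμ0).choose, ⟨0, hp0⟩)⟩
  have hβ0 : 0 ≤ βU := by
    rw [hβU]
    have h := Aux.minEig_convex_le_one (n := Fin m × Fin p) Finset.univ q
      (fun j _ => hq j) hqsum (fun j => bcirc (projT (latSlice U j)))
      (fun j _ => (projT_bcirc_sym_idem U j (hinvcol j)).1)
      (fun j _ => (projT_bcirc_sym_idem U j (hinvcol j)).2)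
    linarith
  have hψ0 : 0 ≤ frobSq (tprod U Xd) := frobSq_nonneg' _
  have hφ0 : 0 ≤ frobSq Xd := frobSq_nonneg' _
  -- iterates and recursion
  have hitsucc : ∀ (t : ℕ) (ω : Fin t → Fin m₁ × {μ : Finset (Fin m) // μ ∈ TU})
      (a : Fin m₁ × {μ : Finset (Fin m) // μ ∈ TU}),
      tbrekIter U Y (List.ofFn fun s : Fin (t+1) =>
          (((Fin.snoc ω a : Fin (t+1) → _) s).1, ((Fin.snoc ω a : Fin (t+1) → _) s).2.1))
        = tbrekStep U Y (tbrekIter U Y (List.ofFn fun s => ((ω s).1, (ω s).2.1)))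
            (a.1, a.2.1) := by
    intro t ω a
    rw [List.ofFn_succ']
    have h1 : (fun i : Fin t =>
        (((Fin.snoc ω a : Fin (t+1) → _) i.castSucc).1,
          ((Fin.snoc ω a : Fin (t+1) → _) i.castSucc).2.1))
        = fun i : Fin t => ((ω i).1, (ω i).2.1) := by
      funext i; rw [Fin.snoc_castSucc]
    have h2 : (((Fin.snoc ω a : Fin (t+1) → _) (Fin.last t)).1,
        ((Fin.snoc ω a : Fin (t+1) → _) (Fin.last t)).2.1) = (a.1, a.2.1) := by
      rw [Fin.snoc_last]
    rw [h1, h2, tbrekIter, tbrekIter, List.concat_eq_append, List.foldl_concat]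
  -- the W recursion
  have hΨ : ∀ t : ℕ, ∑ ω : Fin t → Fin m₁ × {μ : Finset (Fin m) // μ ∈ TU},
      (∏ s : Fin t, q (ω s).1 * probU (ω s).2.1) *
        frobSq ((tbrekIter U Y (List.ofFn fun s => ((ω s).1, (ω s).2.1))).1 - Wst)
      ≤ βU ^ t * frobSq (tprod U Xd) := by
    intro t
    induction t with
    | zero =>
      have hy : Y - Wst = tprod U Xd := by rw [hWstdef]; abel
      simp [tbrekIter, hy]
    | succ t ih =>
      rw [Aux.sum_split t]
      have hinner : ∀ ω : Fin t → Fin m₁ × {μ : Finset (Fin m) // μ ∈ TU},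
          ∑ a : Fin m₁ × {μ : Finset (Fin m) // μ ∈ TU},
            (∏ s : Fin (t+1), q ((Fin.snoc ω a : Fin (t+1) → _) s).1 *
                probU ((Fin.snoc ω a : Fin (t+1) → _) s).2.1) *
              frobSq ((tbrekIter U Y (List.ofFn fun s =>
                (((Fin.snoc ω a : Fin (t+1) → _) s).1,
                  ((Fin.snoc ω a : Fin (t+1) → _) s).2.1))).1 - Wst)
          ≤ (∏ s : Fin t, q (ω s).1 * probU (ω s).2.1) *
              (βU * frobSq ((tbrekIter U Y (List.ofFn fun s => ((ω s).1, (ω s).2.1))).1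
                - Wst)) := by
        intro ω
        have hprodnn : 0 ≤ ∏ s : Fin t, q (ω s).1 * probU (ω s).2.1 :=
          Finset.prod_nonneg fun s _ =>
            mul_nonneg (hq (ω s).1) (hprob (ω s).2.1 (ω s).2.2)
        calc ∑ a : Fin m₁ × {μ : Finset (Fin m) // μ ∈ TU},
            (∏ s : Fin (t+1), q ((Fin.snoc ω a : Fin (t+1) → _) s).1 *
                probU ((Fin.snoc ω a : Fin (t+1) → _) s).2.1) *
              frobSq ((tbrekIter U Y (List.ofFn fun s =>
                (((Fin.snoc ω a : Fin (t+1) → _) s).1,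
                  ((Fin.snoc ω a : Fin (t+1) → _) s).2.1))).1 - Wst)
            = (∏ s : Fin t, q (ω s).1 * probU (ω s).2.1) *
                ∑ a : Fin m₁ × {μ : Finset (Fin m) // μ ∈ TU},
                  (q a.1 * probU a.2.1) *
                    frobSq ((tbrekStep U Y
                      (tbrekIter U Y (List.ofFn fun s => ((ω s).1, (ω s).2.1)))
                      (a.1, a.2.1)).1 - Wst) := by
              rw [Finset.mul_sum]
              refine Finset.sum_congr rfl fun a _ => ?_
              rw [Aux.prod_snoc (fun x => q x.1 * probU x.2.1) t ω a, hitsucc t ω a]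
              ring
        _ ≤ (∏ s : Fin t, q (ω s).1 * probU (ω s).2.1) *
              (βU * frobSq ((tbrekIter U Y (List.ofFn fun s => ((ω s).1, (ω s).2.1))).1
                - Wst)) := by
              refine mul_le_mul_of_nonneg_left ?_ hprodnn
              exact stepW U Y Wst q hq hqsum hlat hinvcol βU hβU TU probU hprobsum _
      calc ∑ ω : Fin t → Fin m₁ × {μ : Finset (Fin m) // μ ∈ TU},
          ∑ a : Fin m₁ × {μ : Finset (Fin m) // μ ∈ TU}, _
          ≤ ∑ ω : Fin t → Fin m₁ × {μ : Finset (Fin m) // μ ∈ TU},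
            (∏ s : Fin t, q (ω s).1 * probU (ω s).2.1) *
              (βU * frobSq ((tbrekIter U Y (List.ofFn fun s => ((ω s).1, (ω s).2.1))).1
                - Wst)) := Finset.sum_le_sum fun ω _ => hinner ω
      _ = βU * ∑ ω : Fin t → Fin m₁ × {μ : Finset (Fin m) // μ ∈ TU},
            (∏ s : Fin t, q (ω s).1 * probU (ω s).2.1) *
              frobSq ((tbrekIter U Y (List.ofFn fun s => ((ω s).1, (ω s).2.1))).1 - Wst) := by
            rw [Finset.mul_sum]
            exact Finset.sum_congr rfl fun ω _ => by ring
      _ ≤ βU * (βU ^ t * frobSq (tprod U Xd)) := mul_le_mul_of_nonneg_left ih hβ0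
      _ = βU ^ (t+1) * frobSq (tprod U Xd) := by ring
  -- the X recursion
  have hΦ : ∀ t : ℕ, ∑ ω : Fin t → Fin m₁ × {μ : Finset (Fin m) // μ ∈ TU},
      (∏ s : Fin t, q (ω s).1 * probU (ω s).2.1) *
        frobSq ((tbrekIter U Y (List.ofFn fun s => ((ω s).1, (ω s).2.1))).2 - Xd)
      ≤ αU ^ t * frobSq Xd +
          θ'' * (∑ s ∈ Finset.Icc 1 t, βU ^ s * αU ^ (t - s)) * frobSq (tprod U Xd) := by
    intro t
    induction t with
    | zero =>
      have hz : (0 : Tensor (Fin m₁) (Fin l) p) - Xd = -Xd := by abel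
      have hneg : frobSq (-Xd : Tensor (Fin m₁) (Fin l) p) = frobSq Xd := by
        simp [frobSq]
      simp [tbrekIter, hz, hneg]
    | succ t ih =>
      rw [Aux.sum_split t]
      have hinner : ∀ ω : Fin t → Fin m₁ × {μ : Finset (Fin m) // μ ∈ TU},
          ∑ a : Fin m₁ × {μ : Finset (Fin m) // μ ∈ TU},
            (∏ s : Fin (t+1), q ((Fin.snoc ω a : Fin (t+1) → _) s).1 *
                probU ((Fin.snoc ω a : Fin (t+1) → _) s).2.1) *
              frobSq ((tbrekIter U Y (List.ofFn fun s =>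
                (((Fin.snoc ω a : Fin (t+1) → _) s).1,
                  ((Fin.snoc ω a : Fin (t+1) → _) s).2.1))).2 - Xd)
          ≤ (∏ s : Fin t, q (ω s).1 * probU (ω s).2.1) *
              (αU * frobSq ((tbrekIter U Y (List.ofFn fun s => ((ω s).1, (ω s).2.1))).2 - Xd)
                + θ'' * (βU * frobSq ((tbrekIter U Y
                    (List.ofFn fun s => ((ω s).1, (ω s).2.1))).1 - Wst))) := by
        intro ω
        have hprodnn : 0 ≤ ∏ s : Fin t, q (ω s).1 * probU (ω s).2.1 :=
          Finset.prod_nonneg fun s _ =>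
            mul_nonneg (hq (ω s).1) (hprob (ω s).2.1 (ω s).2.2)
        calc ∑ a : Fin m₁ × {μ : Finset (Fin m) // μ ∈ TU},
            (∏ s : Fin (t+1), q ((Fin.snoc ω a : Fin (t+1) → _) s).1 *
                probU ((Fin.snoc ω a : Fin (t+1) → _) s).2.1) *
              frobSq ((tbrekIter U Y (List.ofFn fun s =>
                (((Fin.snoc ω a : Fin (t+1) → _) s).1,
                  ((Fin.snoc ω a : Fin (t+1) → _) s).2.1))).2 - Xd)
            = (∏ s : Fin t, q (ω s).1 * probU (ω s).2.1) *
                ∑ a : Fin m₁ × {μ : Finset (Fin m) // μ ∈ TU},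
                  (q a.1 * probU a.2.1) *
                    frobSq ((tbrekStep U Y
                      (tbrekIter U Y (List.ofFn fun s => ((ω s).1, (ω s).2.1)))
                      (a.1, a.2.1)).2 - Xd) := by
              rw [Finset.mul_sum]
              refine Finset.sum_congr rfl fun a _ => ?_
              rw [Aux.prod_snoc (fun x => q x.1 * probU x.2.1) t ω a, hitsucc t ω a]
              ring
        _ ≤ _ := by
              refine mul_le_mul_of_nonneg_left ?_ hprodnn
              exact stepX U Y Wst Xd hY q hq hqsum hlat hinvcol TU hTUne probU hprob
                hprobsum hinvrow αU βU hαU hβU (by rw [hθ''def] at hθ''0; exact hθ''0) _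
      calc ∑ ω : Fin t → Fin m₁ × {μ : Finset (Fin m) // μ ∈ TU},
          ∑ a : Fin m₁ × {μ : Finset (Fin m) // μ ∈ TU}, _
          ≤ ∑ ω : Fin t → Fin m₁ × {μ : Finset (Fin m) // μ ∈ TU},
            (∏ s : Fin t, q (ω s).1 * probU (ω s).2.1) *
              (αU * frobSq ((tbrekIter U Y (List.ofFn fun s => ((ω s).1, (ω s).2.1))).2 - Xd)
                + θ'' * (βU * frobSq ((tbrekIter U Y
                    (List.ofFn fun s => ((ω s).1, (ω s).2.1))).1 - Wst))) :=
            Finset.sum_le_sum fun ω _ => hinner ω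
      _ = αU * (∑ ω : Fin t → Fin m₁ × {μ : Finset (Fin m) // μ ∈ TU},
            (∏ s : Fin t, q (ω s).1 * probU (ω s).2.1) *
              frobSq ((tbrekIter U Y (List.ofFn fun s => ((ω s).1, (ω s).2.1))).2 - Xd))
          + (θ'' * βU) * (∑ ω : Fin t → Fin m₁ × {μ : Finset (Fin m) // μ ∈ TU},
            (∏ s : Fin t, q (ω s).1 * probU (ω s).2.1) *
              frobSq ((tbrekIter U Y (List.ofFn fun s => ((ω s).1, (ω s).2.1))).1 - Wst)) := by
            rw [Finset.mul_sum, Finset.mul_sum, ← Finset.sum_add_distrib]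
            exact Finset.sum_congr rfl fun ω _ => by ring
      _ ≤ αU * (αU ^ t * frobSq Xd +
              θ'' * (∑ s ∈ Finset.Icc 1 t, βU ^ s * αU ^ (t - s)) * frobSq (tprod U Xd))
          + (θ'' * βU) * (βU ^ t * frobSq (tprod U Xd)) := by
            have h1 := mul_le_mul_of_nonneg_left ih hα0
            have h2 := mul_le_mul_of_nonneg_left (hΨ t) (mul_nonneg hθ''0 hβ0)
            linarith
      _ = αU ^ (t+1) * frobSq Xd +
            θ'' * (αU * (∑ s ∈ Finset.Icc 1 t, βU ^ s * αU ^ (t - s)) + βU ^ (t+1)) *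
              frobSq (tprod U Xd) := by ring
      _ = αU ^ (t+1) * frobSq Xd +
            θ'' * (∑ s ∈ Finset.Icc 1 (t+1), βU ^ s * αU ^ (t + 1 - s)) *
              frobSq (tprod U Xd) := by
            congr 2
            rw [Finset.sum_Icc_succ_top (Nat.succ_le_succ (Nat.zero_le t)), Nat.sub_self,
              pow_zero, mul_one, Finset.mul_sum]
            refine congrArg (fun z => θ'' * (z + βU ^ (t+1))) ?_
            refine Finset.sum_congr rfl fun s hs => ?_
            have hst : s ≤ t := (Finset.mem_Icc.mp hs).2
            rw [show t + 1 - s = (t - s) + 1 from by omega, pow_succ]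
            ring
  -- conclusion
  have hθle : θ'' ≤ θU := by
    have hd1 : 1 ≤ TU.sup Finset.card :=
      le_trans (Finset.card_pos.mpr (hTUne μ0 hμ0)) (Finset.le_sup hμ0)
    have hdp : (1 : ℝ) ≤ ((TU.sup Finset.card : ℕ) : ℝ) * p := by
      have h1 : (1:ℝ) ≤ ((TU.sup Finset.card : ℕ) : ℝ) := by exact_mod_cast hd1
      have h2 : (1:ℝ) ≤ (p : ℝ) := by exact_mod_cast hp0
      nlinarith
    rw [hθU]
    calc θ'' = 1 * θ'' := (one_mul _).symm
    _ ≤ (((TU.sup Finset.card : ℕ) : ℝ) * p) * θ'' :=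
        mul_le_mul_of_nonneg_right hdp hθ''0
  have hS0 : 0 ≤ ∑ s ∈ Finset.Icc 1 t, βU ^ s * αU ^ (t - s) :=
    Finset.sum_nonneg fun s _ => mul_nonneg (pow_nonneg hβ0 s) (pow_nonneg hα0 _)
  have hfinal := hΦ t
  have hkey : θ'' * (∑ s ∈ Finset.Icc 1 t, βU ^ s * αU ^ (t - s)) * frobSq (tprod U Xd)
      ≤ θU * (∑ s ∈ Finset.Icc 1 t, βU ^ s * αU ^ (t - s)) * frobSq (tprod U Xd) := by
    have := mul_nonneg hS0 hψ0
    nlinarith [hθle]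
  linarith
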